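/- In the Yokonuma–Hecke algebra Y_{d,n}(u) (n ≥ 3) the following identities hold for the element c_{1,2}: (1) g_1 c_{1,2} = [1 + (u−1)e_1] c_{1,2}; (2) g_2 c_{1,2} = [1 + (u−1)e_2] c_{1,2}; (3) g_1 g_2 c_{1,2} = [1 + (u−1)e_1 + (u−1)e_{1,3} + (u−1)² e_1 e_2] c_{1,2}; (4) g_2 g_1 c_{1,2} = [1 + (u−1)e_2 + (u−1)e_{1,3} + (u−1)² e_1 e_2] c_{1,2}; (5) g_1 g_2 g_1 c_{1,2} = [1 + (u−1)(e_1 + e_2 + e_{1,3}) + (u−1)²(u+2) e_1 e_2] c_{1,2}. -/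

import Mathlib

noncomputable section

open scoped BigOperators

/-- Index type for the generators of the Yokonuma–Hecke algebra `Y_{d,n}(u)`:
`Sum.inl i` encodes the braiding generator `g_{i+1}` and `Sum.inr j` the framing
generator `t_{j+1}` (`0`-based encoding of the `1`-based generators). -/
abbrev YHIdx (n : ℕ) := Sum (Fin (n - 1)) (Fin n)

/-- The free `ℂ`-algebra on the generators `g_1, …, g_{n-1}, t_1, …, t_n`. -/
abbrev YHFree (n : ℕ) := FreeAlgebra ℂ (YHIdx n)

/-- The generator `g_i` (1-based) of the free algebra; junk value `0` out of range. -/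
def gF (n i : ℕ) : YHFree n :=
  if h : 1 ≤ i ∧ i ≤ n - 1 then FreeAlgebra.ι ℂ (Sum.inl ⟨i - 1, by omega⟩) else 0

/-- The generator `t_j` (1-based) of the free algebra; junk value `0` out of range. -/
def tF (n j : ℕ) : YHFree n :=
  if h : 1 ≤ j ∧ j ≤ n then FreeAlgebra.ι ℂ (Sum.inr ⟨j - 1, by omega⟩) else 0

/-- The element `e_i := (1/d) ∑_{s=0}^{d-1} t_i^s t_{i+1}^{d-s}` of the free algebra. -/
def eF (d n i : ℕ) : YHFree n :=
  (d : ℂ)⁻¹ • ∑ s ∈ Finset.range d, tF n i ^ s * tF n (i + 1) ^ (d - s)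

/-- The defining relations of the Yokonuma–Hecke algebra `Y_{d,n}(u)`. -/
inductive YHRel (d n : ℕ) (u : ℂ) : YHFree n → YHFree n → Prop
  | g_comm {i j : ℕ} (hi : 1 ≤ i) (hij : i + 1 < j) (hj : j ≤ n - 1) :
      YHRel d n u (gF n i * gF n j) (gF n j * gF n i)
  | braid {i : ℕ} (hi : 1 ≤ i) (hi' : i + 1 ≤ n - 1) :
      YHRel d n u (gF n i * gF n (i + 1) * gF n i)
        (gF n (i + 1) * gF n i * gF n (i + 1))
  | t_comm {i j : ℕ} (hi : 1 ≤ i) (hi' : i ≤ n) (hj : 1 ≤ j) (hj' : j ≤ n) :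
      YHRel d n u (tF n i * tF n j) (tF n j * tF n i)
  | t_pow {i : ℕ} (hi : 1 ≤ i) (hi' : i ≤ n) : YHRel d n u (tF n i ^ d) 1
  | g_t {i : ℕ} (hi : 1 ≤ i) (hi' : i ≤ n - 1) :
      YHRel d n u (gF n i * tF n i) (tF n (i + 1) * gF n i)
  | g_t' {i : ℕ} (hi : 1 ≤ i) (hi' : i ≤ n - 1) :
      YHRel d n u (gF n i * tF n (i + 1)) (tF n i * gF n i)
  | g_t_comm {i j : ℕ} (hi : 1 ≤ i) (hi' : i ≤ n - 1) (hj : 1 ≤ j) (hj' : j ≤ n)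
      (h1 : j ≠ i) (h2 : j ≠ i + 1) :
      YHRel d n u (gF n i * tF n j) (tF n j * gF n i)
  | quad {i : ℕ} (hi : 1 ≤ i) (hi' : i ≤ n - 1) :
      YHRel d n u (gF n i ^ 2)
        (1 + (u - 1) • eF d n i + (u - 1) • (eF d n i * gF n i))

/-- The Yokonuma–Hecke algebra `Y_{d,n}(u)`: the quotient of the free algebra on the
generators `g_1, …, g_{n-1}, t_1, …, t_n` by (the two-sided ideal generated by) the
defining relations. -/
abbrev YH (d n : ℕ) (u : ℂ) := RingQuot (YHRel d n u)

/-- The generator `g_i` of `Y_{d,n}(u)` (1-based). -/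
def yg (d n : ℕ) (u : ℂ) (i : ℕ) : YH d n u :=
  RingQuot.mkAlgHom ℂ (YHRel d n u) (gF n i)

/-- The generator `t_j` of `Y_{d,n}(u)` (1-based). -/
def yt (d n : ℕ) (u : ℂ) (j : ℕ) : YH d n u :=
  RingQuot.mkAlgHom ℂ (YHRel d n u) (tF n j)

/-- The idempotent `e_i = (1/d) ∑_{s=0}^{d-1} t_i^s t_{i+1}^{d-s}` in `Y_{d,n}(u)`. -/
def ye (d n : ℕ) (u : ℂ) (i : ℕ) : YH d n u :=
  (d : ℂ)⁻¹ • ∑ s ∈ Finset.range d, yt d n u i ^ s * yt d n u (i + 1) ^ (d - s)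

/-- The element `e_{i,j} = (1/d) ∑_{s=0}^{d-1} t_i^s t_j^{d-s}` in `Y_{d,n}(u)`. -/
def yeij (d n : ℕ) (u : ℂ) (i j : ℕ) : YH d n u :=
  (d : ℂ)⁻¹ • ∑ s ∈ Finset.range d, yt d n u i ^ s * yt d n u j ^ (d - s)

/-- The Steinberg-type element
`g_{i,i+1} = 1 + g_i + g_{i+1} + g_i g_{i+1} + g_{i+1} g_i + g_i g_{i+1} g_i`. -/
def ygSt (d n : ℕ) (u : ℂ) (i : ℕ) : YH d n u :=
  1 + yg d n u i + yg d n u (i + 1) + yg d n u i * yg d n u (i + 1)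
    + yg d n u (i + 1) * yg d n u i + yg d n u i * yg d n u (i + 1) * yg d n u i

/-- The element `r_{i,i+1} = e_i e_{i+1} g_{i,i+1}` of `Y_{d,n}(u)`. -/
def yr (d n : ℕ) (u : ℂ) (i : ℕ) : YH d n u :=
  ye d n u i * ye d n u (i + 1) * ygSt d n u i

/-- The element `c_{i,i+1} = (∑_{k=0}^{d-1} t_i^k) e_i e_{i+1} g_{i,i+1}` of `Y_{d,n}(u)`. -/
def yc (d n : ℕ) (u : ℂ) (i : ℕ) : YH d n u :=
  (∑ k ∈ Finset.range d, yt d n u i ^ k) *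
    (ye d n u i * ye d n u (i + 1) * ygSt d n u i)

/-!
Write `c_{i,i+1} = P g_{i,i+1}` with `P = (∑ₖ t_iᵏ) e_i e_{i+1}`. The idempotent `e_i e_{i+1}`
forces `t_i = t_{i+1} = t_{i+2}`: it absorbs every `e_{j,k}` with `i ≤ j, k ≤ i + 2`, and since
`g_i`, `g_{i+1}` only permute these three framings, both commute with `P`. On the other side,
`g_{i,i+1} = (1 + g_i)(1 + g_{i+1} + g_{i+1} g_i) = (1 + g_{i+1})(1 + g_i + g_i g_{i+1})` by the
braid relation, and the quadratic relation gives `g (1 + g) = (1 + (u - 1) e) (1 + g)`. Hence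
`g_i c = u c`, `g_{i+1} c = u c` and `e_{j,k} c = c`, and the five identities become identities
between scalar multiples of `c`.
-/

open Finset

section FramingIdempotent

variable {K A : Type*} [Field K] [Ring A] [Algebra K A]

-- `e_{i,j} = framingIdem ℂ d t_i t_j`; for commuting `a`, `b` with `a ^ d = b ^ d = 1` it is the
-- projector onto the joint eigenspaces where `a = b`.
variable (K) in
def framingIdem (d : ℕ) (a b : A) : A := (d : K)⁻¹ • ∑ s ∈ range d, a ^ s * b ^ (d - s)

variable {d : ℕ} {a b : A}

lemma SemiconjBy.finset_sum_right {ι : Type*} (s : Finset ι) {g : A} {f f' : ι → A}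
    (h : ∀ i ∈ s, SemiconjBy g (f i) (f' i)) : SemiconjBy g (∑ i ∈ s, f i) (∑ i ∈ s, f' i) := by
  simp only [SemiconjBy, mul_sum, sum_mul]
  exact sum_congr rfl fun i hi => (h i hi).eq

lemma SemiconjBy.framingIdem {g a' b' : A} (ha : SemiconjBy g a a') (hb : SemiconjBy g b b') :
    SemiconjBy g (framingIdem K d a b) (framingIdem K d a' b') :=
  (SemiconjBy.finset_sum_right _ fun s _ =>
    (ha.pow_right s).mul_right (hb.pow_right (d - s))).smul_right _

lemma Commute.framingIdem_right {c : A} (ha : Commute c a) (hb : Commute c b) :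
    Commute c (framingIdem K d a b) :=
  SemiconjBy.framingIdem ha hb

lemma framingIdem_comm (hab : Commute a b) (ha : a ^ d = 1) (hb : b ^ d = 1) :
    framingIdem K d a b = framingIdem K d b a := by
  have reflect := sum_range_reflect (fun s => a ^ s * b ^ (d - s)) (d + 1)
  simp only [sum_range_succ, add_tsub_cancel_right, tsub_zero, Nat.sub_self, pow_zero, mul_one,
    ha, hb] at reflect
  rw [framingIdem, framingIdem, ← add_right_cancel reflect]
  congr 1
  refine sum_congr rfl fun s hs => ?_
  rw [Nat.sub_sub_self (mem_range.1 hs).le, (hab.pow_pow _ _).eq]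

lemma framingIdem_mul_left_eq_mul_right (hab : Commute a b) (ha : a ^ d = 1) (hb : b ^ d = 1) :
    framingIdem K d a b * a = framingIdem K d a b * b := by
  set f : ℕ → A := fun s => a ^ s * b ^ (d + 1 - s)
  have hf : f d = f 0 := by simp [f, ha, pow_succ, hb]
  have shift : ∑ s ∈ range d, f (s + 1) = ∑ s ∈ range d, f s :=
    add_right_cancel ((sum_range_succ' f d).symm.trans ((sum_range_succ f d).trans (by rw [hf])))
  simp only [framingIdem, smul_mul_assoc, sum_mul]
  congr 1
  calc ∑ s ∈ range d, a ^ s * b ^ (d - s) * a = ∑ s ∈ range d, f (s + 1) :=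
        sum_congr rfl fun s _ => by
          rw [show f (s + 1) = a ^ (s + 1) * b ^ (d - s) by simp [f], pow_succ, mul_assoc,
            mul_assoc, (hab.pow_right _).eq]
    _ = ∑ s ∈ range d, f s := shift
    _ = ∑ s ∈ range d, a ^ s * b ^ (d - s) * b :=
        sum_congr rfl fun s hs => by
          rw [mul_assoc, ← pow_succ, ← Nat.sub_add_comm (mem_range.1 hs).le]

lemma framingIdem_mul_pow_left_eq_mul_pow_right (hab : Commute a b) (ha : a ^ d = 1)
    (hb : b ^ d = 1) (k : ℕ) : framingIdem K d a b * a ^ k = framingIdem K d a b * b ^ k := by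
  induction k with
  | zero => simp
  | succ k ih =>
    rw [pow_succ, ← mul_assoc, ih, mul_assoc, ← (hab.pow_right k).eq, ← mul_assoc,
      framingIdem_mul_left_eq_mul_right hab ha hb, mul_assoc, ← pow_succ']

lemma mul_framingIdem_congr_left {x c : A} (h : ∀ k, x * a ^ k = x * c ^ k) :
    x * framingIdem K d a b = x * framingIdem K d c b := by
  simp only [framingIdem, mul_smul_comm, mul_sum, ← mul_assoc, h]

lemma mul_framingIdem_eq_self {x : A} (hd : (d : K) ≠ 0) (hb : b ^ d = 1)
    (h : ∀ k, x * a ^ k = x * b ^ k) : x * framingIdem K d a b = x := by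
  have term : ∀ s ∈ range d, x * (a ^ s * b ^ (d - s)) = x := fun s hs => by
    rw [← mul_assoc, h, mul_assoc, ← pow_add, Nat.add_sub_cancel' (mem_range.1 hs).le, hb,
      mul_one]
  rw [framingIdem, mul_smul_comm, mul_sum, sum_congr rfl term, sum_const, card_range,
    ← Nat.cast_smul_eq_nsmul K, smul_smul, inv_mul_cancel₀ hd, one_smul]

end FramingIdempotent

section QuadraticRelation

variable {K A : Type*} [CommRing K] [Ring A] [Algebra K A]

lemma mul_one_add_self_of_mul_self {g e : A} {r : K} (h : g * g = 1 + r • e + r • (e * g)) :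
    g * (1 + g) = (1 + r • e) * (1 + g) := by
  rw [mul_add, mul_one, h]
  simp only [add_mul, mul_add, one_mul, mul_one, smul_mul_assoc]
  abel

lemma Commute.mul_mul_eq_smul {g p x e : A} {r : K} (hgp : Commute g p)
    (hgx : g * x = (1 + r • e) * x) (hpe : p * e = p) : g * (p * x) = (1 + r) • (p * x) := by
  rw [← mul_assoc, hgp.eq, mul_assoc, hgx, add_mul, one_mul, mul_add, smul_mul_assoc,
    mul_smul_comm, ← mul_assoc, hpe, add_smul, one_smul]

end QuadraticRelation

section Relations

variable {d n : ℕ} {u : ℂ}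

lemma yt_commute {i j : ℕ} (hi : 1 ≤ i) (hi' : i ≤ n) (hj : 1 ≤ j) (hj' : j ≤ n) :
    Commute (yt d n u i) (yt d n u j) := by
  simpa only [Commute, SemiconjBy, map_mul, yt] using
    RingQuot.mkAlgHom_rel ℂ (YHRel.t_comm (d := d) (u := u) hi hi' hj hj')

lemma yt_pow {i : ℕ} (hi : 1 ≤ i) (hi' : i ≤ n) : yt d n u i ^ d = 1 := by
  simpa only [map_pow, map_one, yt] using
    RingQuot.mkAlgHom_rel ℂ (YHRel.t_pow (d := d) (u := u) hi hi')

lemma yg_semiconj_yt_self {i : ℕ} (hi : 1 ≤ i) (hi' : i ≤ n - 1) :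
    SemiconjBy (yg d n u i) (yt d n u i) (yt d n u (i + 1)) := by
  simpa only [SemiconjBy, map_mul, yt, yg] using
    RingQuot.mkAlgHom_rel ℂ (YHRel.g_t (d := d) (u := u) hi hi')

lemma yg_semiconj_yt_succ {i : ℕ} (hi : 1 ≤ i) (hi' : i ≤ n - 1) :
    SemiconjBy (yg d n u i) (yt d n u (i + 1)) (yt d n u i) := by
  simpa only [SemiconjBy, map_mul, yt, yg] using
    RingQuot.mkAlgHom_rel ℂ (YHRel.g_t' (d := d) (u := u) hi hi')

lemma yg_commute_yt {i j : ℕ} (hi : 1 ≤ i) (hi' : i ≤ n - 1) (hj : 1 ≤ j) (hj' : j ≤ n)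
    (hji : j ≠ i) (hji' : j ≠ i + 1) : Commute (yg d n u i) (yt d n u j) := by
  simpa only [Commute, SemiconjBy, map_mul, yt, yg] using
    RingQuot.mkAlgHom_rel ℂ (YHRel.g_t_comm (d := d) (u := u) hi hi' hj hj' hji hji')

lemma yg_braid {i : ℕ} (hi : 1 ≤ i) (hi' : i + 1 ≤ n - 1) :
    yg d n u i * yg d n u (i + 1) * yg d n u i
      = yg d n u (i + 1) * yg d n u i * yg d n u (i + 1) := by
  simpa only [map_mul, yg] using
    RingQuot.mkAlgHom_rel ℂ (YHRel.braid (d := d) (u := u) hi hi')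

lemma yg_mul_self {i : ℕ} (hi : 1 ≤ i) (hi' : i ≤ n - 1) :
    yg d n u i * yg d n u i
      = 1 + (u - 1) • ye d n u i + (u - 1) • (ye d n u i * yg d n u i) := by
  simpa only [map_pow, map_add, map_one, map_smul, map_mul, map_sum, pow_two, eF, ye, yt, yg]
    using
    RingQuot.mkAlgHom_rel ℂ (YHRel.quad (d := d) (u := u) hi hi')

end Relations

section YHFramingIdempotents

variable {d n : ℕ} {u : ℂ}

lemma ye_eq_yeij (i : ℕ) : ye d n u i = yeij d n u i (i + 1) := rfl

lemma yeij_comm {i j : ℕ} (hi : 1 ≤ i) (hi' : i ≤ n) (hj : 1 ≤ j) (hj' : j ≤ n) :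
    yeij d n u i j = yeij d n u j i :=
  framingIdem_comm (yt_commute hi hi' hj hj') (yt_pow hi hi') (yt_pow hj hj')

lemma yeij_mul_yt_pow {i j : ℕ} (hi : 1 ≤ i) (hi' : i ≤ n) (hj : 1 ≤ j) (hj' : j ≤ n) (k : ℕ) :
    yeij d n u i j * yt d n u i ^ k = yeij d n u i j * yt d n u j ^ k :=
  framingIdem_mul_pow_left_eq_mul_pow_right (yt_commute hi hi' hj hj') (yt_pow hi hi')
    (yt_pow hj hj') k

lemma yt_commute_yeij {k i j : ℕ} (hk : 1 ≤ k) (hk' : k ≤ n) (hi : 1 ≤ i) (hi' : i ≤ n)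
    (hj : 1 ≤ j) (hj' : j ≤ n) : Commute (yt d n u k) (yeij d n u i j) :=
  (yt_commute hk hk' hi hi').framingIdem_right (yt_commute hk hk' hj hj')

lemma yeij_commute_yeij {i j k l : ℕ} (hi : 1 ≤ i) (hi' : i ≤ n) (hj : 1 ≤ j) (hj' : j ≤ n)
    (hk : 1 ≤ k) (hk' : k ≤ n) (hl : 1 ≤ l) (hl' : l ≤ n) :
    Commute (yeij d n u i j) (yeij d n u k l) :=
  (yt_commute_yeij hk hk' hi hi' hj hj').symm.framingIdem_right
    (yt_commute_yeij hl hl' hi hi' hj hj').symm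

end YHFramingIdempotents

section ThreeStrands

variable {d n : ℕ} {u : ℂ} {i : ℕ}

lemma yg_commute_ye (hi : 1 ≤ i) (hi' : i ≤ n - 1) : Commute (yg d n u i) (ye d n u i) := by
  have h : SemiconjBy (yg d n u i) (yeij d n u i (i + 1)) (yeij d n u (i + 1) i) :=
    (yg_semiconj_yt_self hi hi').framingIdem (yg_semiconj_yt_succ hi hi')
  rwa [← yeij_comm hi (by omega) (by omega) (by omega)] at h

lemma yg_semiconj_ye_succ (hi : 1 ≤ i) (hin : i + 2 ≤ n) :
    SemiconjBy (yg d n u i) (ye d n u (i + 1)) (yeij d n u i (i + 2)) :=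
  (yg_semiconj_yt_succ hi (by omega)).framingIdem
    (yg_commute_yt hi (by omega) (by omega) hin (by omega) (by omega))

lemma yg_succ_semiconj_ye (hi : 1 ≤ i) (hin : i + 2 ≤ n) :
    SemiconjBy (yg d n u (i + 1)) (ye d n u i) (yeij d n u i (i + 2)) :=
  (yg_commute_yt (by omega) (by omega) hi (by omega) (by omega) (by omega)).framingIdem
    (yg_semiconj_yt_self (i := i + 1) (by omega) (by omega))

lemma ye_mul_yt_succ_pow (hi : 1 ≤ i) (hi' : i ≤ n - 1) (k : ℕ) :
    ye d n u i * yt d n u (i + 1) ^ k = ye d n u i * yt d n u i ^ k :=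
  (yeij_mul_yt_pow hi (by omega) (by omega) (by omega) k).symm

lemma ye_mul_ye_mul_yt_pow (hi : 1 ≤ i) (hin : i + 2 ≤ n) {j : ℕ} (hj : i ≤ j) (hj' : j ≤ i + 2)
    (k : ℕ) : ye d n u i * ye d n u (i + 1) * yt d n u j ^ k
      = ye d n u i * ye d n u (i + 1) * yt d n u i ^ k := by
  have hcomm : Commute (ye d n u i) (ye d n u (i + 1)) :=
    yeij_commute_yeij hi (by omega) (by omega) (by omega) (by omega) (by omega) (by omega) hin
  have succ : ye d n u i * ye d n u (i + 1) * yt d n u (i + 1) ^ k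
      = ye d n u i * ye d n u (i + 1) * yt d n u i ^ k := by
    rw [hcomm.eq, mul_assoc, ye_mul_yt_succ_pow hi (by omega), ← mul_assoc]
  obtain rfl | rfl | rfl : j = i ∨ j = i + 1 ∨ j = i + 2 := by omega
  · rfl
  · exact succ
  · rw [mul_assoc, ye_mul_yt_succ_pow (i := i + 1) (by omega) (by omega), ← mul_assoc, succ]

lemma ye_mul_ye_mul_yeij (hd : (d : ℂ) ≠ 0) (hi : 1 ≤ i) (hin : i + 2 ≤ n) {j k : ℕ}
    (hj : i ≤ j) (hj' : j ≤ i + 2) (hk : i ≤ k) (hk' : k ≤ i + 2) :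
    ye d n u i * ye d n u (i + 1) * yeij d n u j k = ye d n u i * ye d n u (i + 1) :=
  mul_framingIdem_eq_self hd (yt_pow (by omega) (by omega)) fun m =>
    (ye_mul_ye_mul_yt_pow hi hin hj hj' m).trans (ye_mul_ye_mul_yt_pow hi hin hk hk' m).symm

lemma yt_commute_ye_mul_ye (hi : 1 ≤ i) (hin : i + 2 ≤ n) {j : ℕ} (hj : 1 ≤ j) (hj' : j ≤ n) :
    Commute (yt d n u j) (ye d n u i * ye d n u (i + 1)) :=
  (yt_commute_yeij hj hj' hi (by omega) (by omega) (by omega)).mul_right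
    (yt_commute_yeij hj hj' (by omega) (by omega) (by omega) hin)

lemma yg_commute_ye_mul_ye (hi : 1 ≤ i) (hin : i + 2 ≤ n) :
    Commute (yg d n u i) (ye d n u i * ye d n u (i + 1)) := by
  have h : SemiconjBy (yg d n u i) (ye d n u i * ye d n u (i + 1))
      (ye d n u i * yeij d n u i (i + 2)) :=
    SemiconjBy.mul_right (yg_commute_ye hi (by omega)) (yg_semiconj_ye_succ hi hin)
  have absorb : ye d n u i * yeij d n u i (i + 2) = ye d n u i * ye d n u (i + 1) :=
    mul_framingIdem_congr_left fun k => (ye_mul_yt_succ_pow hi (by omega) k).symm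
  rwa [absorb] at h

lemma yg_succ_commute_ye_mul_ye (hi : 1 ≤ i) (hin : i + 2 ≤ n) :
    Commute (yg d n u (i + 1)) (ye d n u i * ye d n u (i + 1)) := by
  have hcomm : Commute (ye d n u i) (ye d n u (i + 1)) :=
    yeij_commute_yeij hi (by omega) (by omega) (by omega) (by omega) (by omega) (by omega) hin
  have h : SemiconjBy (yg d n u (i + 1)) (ye d n u (i + 1) * ye d n u i)
      (ye d n u (i + 1) * yeij d n u i (i + 2)) :=
    SemiconjBy.mul_right (yg_commute_ye (by omega) (by omega)) (yg_succ_semiconj_ye hi hin)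
  have absorb : ye d n u (i + 1) * yeij d n u i (i + 2) = ye d n u (i + 1) * ye d n u i := by
    rw [yeij_comm hi (by omega) (by omega) hin, ye_eq_yeij i,
      yeij_comm (i := i) hi (by omega) (by omega) (by omega)]
    exact mul_framingIdem_congr_left fun k => ye_mul_yt_succ_pow (by omega) (by omega) k
  rwa [absorb, ← hcomm.eq] at h

lemma ygSt_eq_one_add_yg_mul (i : ℕ) : ygSt d n u i
    = (1 + yg d n u i) * (1 + yg d n u (i + 1) + yg d n u (i + 1) * yg d n u i) := by
  rw [ygSt]
  noncomm_ring

lemma ygSt_eq_one_add_yg_succ_mul (hi : 1 ≤ i) (hin : i + 2 ≤ n) : ygSt d n u i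
    = (1 + yg d n u (i + 1)) * (1 + yg d n u i + yg d n u i * yg d n u (i + 1)) := by
  rw [ygSt, yg_braid hi (by omega)]
  noncomm_ring

lemma yg_mul_ygSt (hi : 1 ≤ i) (hin : i + 2 ≤ n) :
    yg d n u i * ygSt d n u i = (1 + (u - 1) • ye d n u i) * ygSt d n u i := by
  rw [ygSt_eq_one_add_yg_mul, ← mul_assoc, ← mul_assoc,
    mul_one_add_self_of_mul_self (yg_mul_self hi (by omega))]

lemma yg_succ_mul_ygSt (hi : 1 ≤ i) (hin : i + 2 ≤ n) :
    yg d n u (i + 1) * ygSt d n u i = (1 + (u - 1) • ye d n u (i + 1)) * ygSt d n u i := by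
  rw [ygSt_eq_one_add_yg_succ_mul hi hin, ← mul_assoc, ← mul_assoc,
    mul_one_add_self_of_mul_self (yg_mul_self (by omega) (by omega))]

end ThreeStrands

def ycFraming (d n : ℕ) (u : ℂ) (i : ℕ) : YH d n u :=
  (∑ k ∈ range d, yt d n u i ^ k) * (ye d n u i * ye d n u (i + 1))

section CElement

variable {d n : ℕ} {u : ℂ} {i : ℕ}

lemma yc_eq_ycFraming_mul (i : ℕ) : yc d n u i = ycFraming d n u i * ygSt d n u i := by
  simp only [yc, ycFraming, mul_assoc]

lemma yg_commute_ycFraming (hi : 1 ≤ i) (hin : i + 2 ≤ n) :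
    Commute (yg d n u i) (ycFraming d n u i) := by
  have h : SemiconjBy (yg d n u i) (ycFraming d n u i)
      ((∑ k ∈ range d, yt d n u (i + 1) ^ k) * (ye d n u i * ye d n u (i + 1))) :=
    SemiconjBy.mul_right (SemiconjBy.finset_sum_right _ fun k _ =>
      (yg_semiconj_yt_self hi (by omega)).pow_right k) (yg_commute_ye_mul_ye hi hin)
  have shift : (∑ k ∈ range d, yt d n u (i + 1) ^ k) * (ye d n u i * ye d n u (i + 1))
      = ycFraming d n u i := by
    simp only [ycFraming, sum_mul]
    refine sum_congr rfl fun k _ => ?_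
    rw [((yt_commute_ye_mul_ye hi hin (by omega) (by omega)).pow_left k).eq,
      ye_mul_ye_mul_yt_pow hi hin (by omega) (by omega),
      ← ((yt_commute_ye_mul_ye hi hin hi (by omega)).pow_left k).eq]
  rwa [shift] at h

lemma yg_succ_commute_ycFraming (hi : 1 ≤ i) (hin : i + 2 ≤ n) :
    Commute (yg d n u (i + 1)) (ycFraming d n u i) :=
  (Commute.sum_right _ _ _ fun k _ =>
    (yg_commute_yt (by omega) (by omega) hi (by omega) (by omega) (by omega)).pow_right k).mul_right
    (yg_succ_commute_ye_mul_ye hi hin)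

lemma ycFraming_mul_yeij (hd : (d : ℂ) ≠ 0) (hi : 1 ≤ i) (hin : i + 2 ≤ n) {j k : ℕ}
    (hj : i ≤ j) (hj' : j ≤ i + 2) (hk : i ≤ k) (hk' : k ≤ i + 2) :
    ycFraming d n u i * yeij d n u j k = ycFraming d n u i := by
  rw [ycFraming, mul_assoc, ye_mul_ye_mul_yeij hd hi hin hj hj' hk hk']

lemma yeij_mul_ycFraming (hd : (d : ℂ) ≠ 0) (hi : 1 ≤ i) (hin : i + 2 ≤ n) {j k : ℕ}
    (hj : i ≤ j) (hj' : j ≤ i + 2) (hk : i ≤ k) (hk' : k ≤ i + 2) :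
    yeij d n u j k * ycFraming d n u i = ycFraming d n u i := by
  have hS : Commute (yeij d n u j k) (∑ m ∈ range d, yt d n u i ^ m) :=
    Commute.sum_right _ _ _ fun m _ =>
      ((yt_commute_yeij hi (by omega) (by omega) (by omega) (by omega) (by omega)).symm).pow_right m
  have hE : Commute (yeij d n u j k) (ye d n u i * ye d n u (i + 1)) :=
    (yeij_commute_yeij (by omega) (by omega) (by omega) (by omega) hi (by omega) (by omega)
      (by omega)).mul_right
      (yeij_commute_yeij (by omega) (by omega) (by omega) (by omega) (by omega) (by omega)
        (by omega) hin)
  have hP : Commute (yeij d n u j k) (ycFraming d n u i) := hS.mul_right hE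
  rw [hP.eq, ycFraming_mul_yeij hd hi hin hj hj' hk hk']

lemma yg_mul_yc (hd : (d : ℂ) ≠ 0) (hi : 1 ≤ i) (hin : i + 2 ≤ n) :
    yg d n u i * yc d n u i = u • yc d n u i := by
  rw [yc_eq_ycFraming_mul, (yg_commute_ycFraming hi hin).mul_mul_eq_smul (yg_mul_ygSt hi hin)
    (ycFraming_mul_yeij hd hi hin le_rfl (by omega) (by omega) (by omega)), add_sub_cancel]

lemma yg_succ_mul_yc (hd : (d : ℂ) ≠ 0) (hi : 1 ≤ i) (hin : i + 2 ≤ n) :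
    yg d n u (i + 1) * yc d n u i = u • yc d n u i := by
  rw [yc_eq_ycFraming_mul, (yg_succ_commute_ycFraming hi hin).mul_mul_eq_smul
    (yg_succ_mul_ygSt hi hin)
    (ycFraming_mul_yeij hd hi hin (by omega) (by omega) (by omega) (by omega)), add_sub_cancel]

lemma yeij_mul_yc (hd : (d : ℂ) ≠ 0) (hi : 1 ≤ i) (hin : i + 2 ≤ n) {j k : ℕ}
    (hj : i ≤ j) (hj' : j ≤ i + 2) (hk : i ≤ k) (hk' : k ≤ i + 2) :
    yeij d n u j k * yc d n u i = yc d n u i := by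
  rw [yc_eq_ycFraming_mul, ← mul_assoc, yeij_mul_ycFraming hd hi hin hj hj' hk hk']

end CElement

theorem stmt9_general (d n : ℕ) (hd : 1 ≤ d) (hn : 3 ≤ n) (u : ℂ) :
    (yg d n u 1 * yc d n u 1 = (1 + (u - 1) • ye d n u 1) * yc d n u 1) ∧
    (yg d n u 2 * yc d n u 1 = (1 + (u - 1) • ye d n u 2) * yc d n u 1) ∧
    (yg d n u 1 * yg d n u 2 * yc d n u 1 =
      (1 + (u - 1) • ye d n u 1 + (u - 1) • yeij d n u 1 3 +
        ((u - 1) ^ 2) • (ye d n u 1 * ye d n u 2)) * yc d n u 1) ∧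
    (yg d n u 2 * yg d n u 1 * yc d n u 1 =
      (1 + (u - 1) • ye d n u 2 + (u - 1) • yeij d n u 1 3 +
        ((u - 1) ^ 2) • (ye d n u 1 * ye d n u 2)) * yc d n u 1) ∧
    (yg d n u 1 * yg d n u 2 * yg d n u 1 * yc d n u 1 =
      (1 + (u - 1) • (ye d n u 1 + ye d n u 2 + yeij d n u 1 3) +
        ((u - 1) ^ 2 * (u + 2)) • (ye d n u 1 * ye d n u 2)) * yc d n u 1) := by
  have hdC : (d : ℂ) ≠ 0 := Nat.cast_ne_zero.2 (by omega)
  have g1 : yg d n u 1 * yc d n u 1 = u • yc d n u 1 := yg_mul_yc hdC le_rfl hn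
  have g2 : yg d n u 2 * yc d n u 1 = u • yc d n u 1 := yg_succ_mul_yc hdC le_rfl hn
  have e1 : ye d n u 1 * yc d n u 1 = yc d n u 1 :=
    yeij_mul_yc hdC le_rfl hn le_rfl (by omega) (by omega) (by omega)
  have e2 : ye d n u 2 * yc d n u 1 = yc d n u 1 :=
    yeij_mul_yc hdC le_rfl hn (by omega) (by omega) (by omega) le_rfl
  have e13 : yeij d n u 1 3 * yc d n u 1 = yc d n u 1 :=
    yeij_mul_yc hdC le_rfl hn le_rfl (by omega) (by omega) le_rfl
  refine ⟨?_, ?_, ?_, ?_, ?_⟩ <;>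
    simp only [mul_assoc, add_mul, smul_mul_assoc, mul_smul_comm, one_mul, g1, g2, e1, e2, e13] <;>
    module

/-- Identities for `c_{1,2} = (∑_{k=0}^{d-1} t_1^k) e_1 e_2 g_{1,2}`
in `Y_{d,n}(u)` (`n ≥ 3`). -/
theorem stmt9 (d n : ℕ) (hd : 1 ≤ d) (hn : 3 ≤ n) (u : ℂ) (hu : u ≠ 0) :
    (yg d n u 1 * yc d n u 1 = (1 + (u - 1) • ye d n u 1) * yc d n u 1) ∧
    (yg d n u 2 * yc d n u 1 = (1 + (u - 1) • ye d n u 2) * yc d n u 1) ∧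
    (yg d n u 1 * yg d n u 2 * yc d n u 1 =
      (1 + (u - 1) • ye d n u 1 + (u - 1) • yeij d n u 1 3 +
        ((u - 1) ^ 2) • (ye d n u 1 * ye d n u 2)) * yc d n u 1) ∧
    (yg d n u 2 * yg d n u 1 * yc d n u 1 =
      (1 + (u - 1) • ye d n u 2 + (u - 1) • yeij d n u 1 3 +
        ((u - 1) ^ 2) • (ye d n u 1 * ye d n u 2)) * yc d n u 1) ∧
    (yg d n u 1 * yg d n u 2 * yg d n u 1 * yc d n u 1 =
      (1 + (u - 1) • (ye d n u 1 + ye d n u 2 + yeij d n u 1 3) +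
        ((u - 1) ^ 2 * (u + 2)) • (ye d n u 1 * ye d n u 2)) * yc d n u 1) :=
  stmt9_general d n hd hn u
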